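/- arXiv:2502.19203 — 2 statements merged into one kernel-verified Lean document; each statement's English description precedes it below -/
import Mathlib

section
/- (Positive maximum principle on [0,1].) Let B, Σ : [0,∞) × ℝ → ℝ be continuous with Σ(t,0) = Σ(t,1) = 0, B(t,0) ≥ 0 and B(t,1) ≤ 0 for all t ≥ 0, let τ : [0,∞) → ℝ be continuously differentiable with compact support, and let f : ℝ → ℝ be twice continuously differentiable. Suppose (t₀, x₀) ∈ [0,∞) × [0,1] satisfies τ(t₀)·f(x₀) = sup_{(t,x) ∈ [0,∞)×[0,1]} τ(t)·f(x). Then τ(t₀)·( B(t₀,x₀)·f'(x₀) + (1/2)·Σ(t₀,x₀)²·f''(x₀) ) + τ'(t₀)·f(x₀) ≤ 0, where τ'(0) denotes the right-hand derivative of τ at 0. -/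
/-!
The generator splits into a time part `τ'(t₀) f(x₀)` and a space part
`τ(t₀) (B f' + ½ Σ² f'')(x₀)`, and each is nonpositive on its own. Since `t ↦ τ t * f x₀` is
maximal on `[0,∞)` at `t₀`, its right derivative there is `≤ 0`. Since `x ↦ τ t₀ * f x` is
maximal on `[0,1]` at `x₀`: in the interior its first derivative vanishes and its second is
`≤ 0`; at `x₀ = 0` (resp. `1`) the diffusion vanishes and the drift points inwards while the
one-sided derivative is `≤ 0` (resp. `≥ 0`).
-/

open Set Filter Topology

variable {f : ℝ → ℝ} {f' a b : ℝ} {s : Set ℝ}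

theorem IsLocalMaxOn.hasDerivWithinAt_nonpos_of_Icc_subset (h : IsLocalMaxOn f s a)
    (hf : HasDerivWithinAt f f' s a) (hab : a < b) (hs : Icc a b ⊆ s) : f' ≤ 0 := by
  have hdir : b - a ∈ posTangentConeAt s a :=
    sub_mem_posTangentConeAt_of_segment_subset (segment_eq_Icc hab.le ▸ hs)
  have : (b - a) * f' ≤ 0 := by simpa using h.hasFDerivWithinAt_nonpos hf.hasFDerivWithinAt hdir
  exact nonpos_of_mul_nonpos_right this (sub_pos.2 hab)

theorem IsLocalMaxOn.hasDerivWithinAt_nonneg_of_Icc_subset (h : IsLocalMaxOn f s a)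
    (hf : HasDerivWithinAt f f' s a) (hba : b < a) (hs : Icc b a ⊆ s) : 0 ≤ f' := by
  have hdir : b - a ∈ posTangentConeAt s a :=
    sub_mem_posTangentConeAt_of_segment_subset (by rwa [segment_symm, segment_eq_Icc hba.le])
  have : (b - a) * f' ≤ 0 := by simpa using h.hasFDerivWithinAt_nonpos hf.hasFDerivWithinAt hdir
  exact nonneg_of_mul_nonpos_right this (sub_neg.2 hba)

theorem IsLocalMax.deriv_deriv_nonpos (h : IsLocalMax f a) (hc : ContinuousAt f a) :
    deriv (deriv f) a ≤ 0 := by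
  by_contra! hpos
  -- A strict second-derivative test would make `a` also a local minimum, so `f` is locally
  -- constant and its second derivative at `a` vanishes.
  have hmin : IsLocalMin f a := isLocalMin_of_deriv_deriv_pos hpos h.deriv_eq_zero hc
  have hconst : f =ᶠ[𝓝 a] fun _ => f a := by
    filter_upwards [h, hmin] with x hmax hmin using le_antisymm hmax hmin
  have : deriv (deriv f) a = 0 := by
    rw [hconst.deriv.deriv_eq, deriv_const', deriv_const]
  exact hpos.ne' this

theorem generator_nonpos_of_isMaxOn_Icc {g : ℝ → ℝ} {l r β σ x₀ : ℝ}
    (hg : DifferentiableAt ℝ g x₀) (hmax : IsMaxOn g (Icc l r) x₀) (hlr : l < r)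
    (hx₀ : x₀ ∈ Icc l r) (hl : x₀ = l → σ = 0 ∧ 0 ≤ β) (hr : x₀ = r → σ = 0 ∧ β ≤ 0) :
    β * deriv g x₀ + 1 / 2 * σ ^ 2 * deriv (deriv g) x₀ ≤ 0 := by
  have hderiv : HasDerivWithinAt g (deriv g x₀) (Icc l r) x₀ :=
    hg.hasDerivAt.hasDerivWithinAt
  rcases hx₀.1.eq_or_lt with rfl | hlx
  · obtain ⟨rfl, hβ⟩ := hl rfl
    have := hmax.localize.hasDerivWithinAt_nonpos_of_Icc_subset hderiv hlr subset_rfl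
    nlinarith
  rcases hx₀.2.eq_or_lt with rfl | hxr
  · obtain ⟨rfl, hβ⟩ := hr rfl
    have := hmax.localize.hasDerivWithinAt_nonneg_of_Icc_subset hderiv hlr subset_rfl
    nlinarith
  have hloc : IsLocalMax g x₀ := hmax.isLocalMax (Icc_mem_nhds hlx hxr)
  have h1 : deriv g x₀ = 0 := hloc.deriv_eq_zero
  have h2 := hloc.deriv_deriv_nonpos hg.continuousAt
  rw [h1, mul_zero, zero_add]
  exact mul_nonpos_of_nonneg_of_nonpos (by positivity) h2

theorem stmt_5_general (B Sg : ℝ → ℝ → ℝ)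
    (hSg0 : ∀ t ∈ Set.Ici (0 : ℝ), Sg t 0 = 0)
    (hSg1 : ∀ t ∈ Set.Ici (0 : ℝ), Sg t 1 = 0)
    (hB0 : ∀ t ∈ Set.Ici (0 : ℝ), 0 ≤ B t 0)
    (hB1 : ∀ t ∈ Set.Ici (0 : ℝ), B t 1 ≤ 0)
    (τ τ' : ℝ → ℝ)
    (hτderiv : ∀ t ∈ Set.Ici (0 : ℝ), HasDerivWithinAt τ (τ' t) (Set.Ici 0) t)
    (f : ℝ → ℝ) (hf : ContDiff ℝ 2 f)
    (t₀ x₀ : ℝ) (ht₀ : t₀ ∈ Set.Ici (0 : ℝ)) (hx₀ : x₀ ∈ Set.Icc (0 : ℝ) 1)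
    (hmax : ∀ t ∈ Set.Ici (0 : ℝ), ∀ x ∈ Set.Icc (0 : ℝ) 1, τ t * f x ≤ τ t₀ * f x₀) :
    τ t₀ * (B t₀ x₀ * deriv f x₀ + (1 / 2) * (Sg t₀ x₀) ^ 2 * deriv (deriv f) x₀)
      + τ' t₀ * f x₀ ≤ 0 := by
  have htime : τ' t₀ * f x₀ ≤ 0 := by
    have hmaxT : IsMaxOn (fun t => τ t * f x₀) (Ici 0) t₀ := fun t ht => hmax t ht x₀ hx₀
    exact hmaxT.localize.hasDerivWithinAt_nonpos_of_Icc_subset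
      ((hτderiv t₀ ht₀).mul_const (f x₀)) (lt_add_one t₀)
      (Icc_subset_Ici_iff (lt_add_one t₀).le |>.2 ht₀)
  have hspace := generator_nonpos_of_isMaxOn_Icc (β := B t₀ x₀) (σ := Sg t₀ x₀)
    ((hf.differentiable two_ne_zero x₀).const_mul (τ t₀)) (fun x hx => hmax t₀ ht₀ x hx)
    zero_lt_one hx₀ (by rintro rfl; exact ⟨hSg0 t₀ ht₀, hB0 t₀ ht₀⟩)
    (by rintro rfl; exact ⟨hSg1 t₀ ht₀, hB1 t₀ ht₀⟩)
  simp only [deriv_const_mul_field'] at hspace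
  linarith

/-- Positive maximum principle on the state space `[0,1]`: under the boundary
conditions `Σ(t,0) = Σ(t,1) = 0`, `B(t,0) ≥ 0` and `B(t,1) ≤ 0`, if `τ·f` attains its supremum
over `[0,∞) × [0,1]` at `(t₀, x₀)`, then the time-extended generator applied to `τ·f` at
`(t₀,x₀)` is nonpositive.  Here `τ'` is the (right-hand at `0`) derivative of `τ` on `[0,∞)`. -/
theorem stmt_5 (B Sg : ℝ → ℝ → ℝ)
    (hB : ContinuousOn (fun p : ℝ × ℝ => B p.1 p.2) (Set.Ici 0 ×ˢ Set.univ))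
    (hSg : ContinuousOn (fun p : ℝ × ℝ => Sg p.1 p.2) (Set.Ici 0 ×ˢ Set.univ))
    (hSg0 : ∀ t ∈ Set.Ici (0 : ℝ), Sg t 0 = 0)
    (hSg1 : ∀ t ∈ Set.Ici (0 : ℝ), Sg t 1 = 0)
    (hB0 : ∀ t ∈ Set.Ici (0 : ℝ), 0 ≤ B t 0)
    (hB1 : ∀ t ∈ Set.Ici (0 : ℝ), B t 1 ≤ 0)
    (τ τ' : ℝ → ℝ)
    (hτderiv : ∀ t ∈ Set.Ici (0 : ℝ), HasDerivWithinAt τ (τ' t) (Set.Ici 0) t)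
    (hτ'cont : ContinuousOn τ' (Set.Ici 0))
    (hτsupp : ∃ K : Set ℝ, IsCompact K ∧ ∀ t ∈ Set.Ici (0 : ℝ), t ∉ K → τ t = 0)
    (f : ℝ → ℝ) (hf : ContDiff ℝ 2 f)
    (t₀ x₀ : ℝ) (ht₀ : t₀ ∈ Set.Ici (0 : ℝ)) (hx₀ : x₀ ∈ Set.Icc (0 : ℝ) 1)
    (hmax : ∀ t ∈ Set.Ici (0 : ℝ), ∀ x ∈ Set.Icc (0 : ℝ) 1, τ t * f x ≤ τ t₀ * f x₀) :
    τ t₀ * (B t₀ x₀ * deriv f x₀ + (1 / 2) * (Sg t₀ x₀) ^ 2 * deriv (deriv f) x₀)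
      + τ' t₀ * f x₀ ≤ 0 :=
  stmt_5_general B Sg hSg0 hSg1 hB0 hB1 τ τ' hτderiv f hf t₀ x₀ ht₀ hx₀ hmax
end

section
/- Let N ≥ 1 and let b, β, c, γ, Γ : ℝ^N → ℝ satisfy Assumptions A with constants b₀, β₀, c₀, γ₀, Γ₀ ≥ 0 and functions f_c, f_γ. Then for every z₀ ∈ ℝ^N there exists a continuous nondecreasing function h : [0,∞) → [0,∞), depending only on N, z₀, the constants b₀, β₀, c₀, γ₀, Γ₀, and f_c, f_γ, such that every differentiable solution z : [0,T) → ℝ^N of the moment ODE system with z(0) = z₀ satisfies ‖z(t)‖_N^{2N} ≤ h(t) for all t ∈ [0,T). -/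
open MeasureTheory

/-- The norm `‖x‖_N := (∑_{i=1}^N |x_i|^{2/i})^{1/2}` (components indexed by `Fin N`,
so `x i` is the `(i+1)`-th coordinate). -/
noncomputable def normN (N : ℕ) (x : Fin N → ℝ) : ℝ :=
  Real.sqrt (∑ i : Fin N, |x i| ^ ((2 : ℝ) / ((i : ℕ) + 1)))

/-- Extended components: `extComp N x j = x_j` for `1 ≤ j ≤ N`, with the conventions
`x_0 = 1` and `x_j = 0` for `j < 0`. -/
def extComp (N : ℕ) (x : Fin N → ℝ) (j : ℤ) : ℝ :=
  if h : 0 < j ∧ j ≤ (N : ℤ) then x ⟨(j - 1).toNat, by omega⟩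
  else if j = 0 then 1 else 0

/-- Right-hand side of the moment ODE system for the `(k+1)`-th component (`k : Fin N`). -/
noncomputable def momentRHS (N : ℕ) (b β c γ Γ : (Fin N → ℝ) → ℝ)
    (x : Fin N → ℝ) (k : Fin N) : ℝ :=
  (((k : ℕ) + 1 : ℝ) * β x + (((k : ℕ) + 1 : ℝ) * (k : ℕ) / 2) * Γ x) * x k
    + (((k : ℕ) + 1 : ℝ) * b x + (((k : ℕ) + 1 : ℝ) * (k : ℕ) / 2) * γ x)
        * extComp N x ((k : ℕ) : ℤ)
    + (((k : ℕ) + 1 : ℝ) * (k : ℕ) / 2) * c x * extComp N x (((k : ℕ) : ℤ) - 1)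

/-- `z` solves the moment ODE system on the set `I`. -/
def IsMomentSol (N : ℕ) (b β c γ Γ : (Fin N → ℝ) → ℝ) (I : Set ℝ)
    (z : ℝ → Fin N → ℝ) : Prop :=
  ∀ k : Fin N, ∀ t ∈ I,
    HasDerivWithinAt (fun s => z s k) (momentRHS N b β c γ Γ (z t) k) I t

/-! The first equation is linear, `z₁' = β z₁ + b`, so Grönwall bounds `|z₁|` on `[0, t]` by a
function `A(t)` of `z₀`, and then all coefficients along the solution are controlled by `A(t)`,
`‖z‖_N` and `‖z‖_N²`. Give `z_k` the weight `k`: the Lyapunov function `V = ∑ z_k ^ (2 N! / k)`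
is homogeneous of degree `2 N!`, so with `m = (1 + V) ^ (1 / (2 N!))` we get `|z_k| ≤ m ^ k` and
`‖z‖_N² ≤ N m²`. In `z_k z_k'` the extra growth of `γ` and `c` in `‖z‖_N` is paid for by the
lower indices of `z_{k-1}` and `z_{k-2}`, so every term has weight `2k` and
`|V'| ≤ K(t) (1 + V)`. Grönwall again gives `1 + V(t) ≤ (1 + V(0)) e^{K(t) t}`, and
`‖z‖_N^{2N} ≤ N^N m^{2N} ≤ N^N (1 + V)`. -/

open Set Real

def IsGrowthFunction (φ : ℝ → ℝ) : Prop :=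
  ContinuousOn φ (Ici 0) ∧ MonotoneOn φ (Ici 0) ∧ ∀ t ∈ Ici (0 : ℝ), 0 ≤ φ t

namespace IsGrowthFunction

variable {φ ψ : ℝ → ℝ}

lemma const {c : ℝ} (hc : 0 ≤ c) : IsGrowthFunction fun _ => c :=
  ⟨continuousOn_const, monotoneOn_const, fun _ _ => hc⟩

lemma id : IsGrowthFunction fun t => t :=
  ⟨continuousOn_id, monotone_id.monotoneOn _, fun _ ht => ht⟩

lemma of_monotone (hc : Continuous φ) (hm : Monotone φ) (h0 : 0 ≤ φ 0) :
    IsGrowthFunction φ :=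
  ⟨hc.continuousOn, hm.monotoneOn _, fun _ ht => h0.trans (hm ht)⟩

lemma exp : IsGrowthFunction Real.exp :=
  of_monotone continuous_exp exp_monotone (exp_pos 0).le

lemma add (hφ : IsGrowthFunction φ) (hψ : IsGrowthFunction ψ) :
    IsGrowthFunction fun t => φ t + ψ t :=
  ⟨hφ.1.add hψ.1, hφ.2.1.add hψ.2.1, fun t ht => add_nonneg (hφ.2.2 t ht) (hψ.2.2 t ht)⟩

lemma mul (hφ : IsGrowthFunction φ) (hψ : IsGrowthFunction ψ) :
    IsGrowthFunction fun t => φ t * ψ t :=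
  ⟨hφ.1.mul hψ.1, hφ.2.1.mul hψ.2.1 hφ.2.2 hψ.2.2,
    fun t ht => mul_nonneg (hφ.2.2 t ht) (hψ.2.2 t ht)⟩

lemma comp (hφ : IsGrowthFunction φ) (hψ : IsGrowthFunction ψ) :
    IsGrowthFunction fun t => φ (ψ t) :=
  have hmaps : MapsTo ψ (Ici 0) (Ici 0) := hψ.2.2
  ⟨hφ.1.comp hψ.1 hmaps, hφ.2.1.comp hψ.2.1 hmaps, fun _ ht => hφ.2.2 _ (hmaps ht)⟩

end IsGrowthFunction

lemma norm_le_gronwallBound_of_hasDerivWithinAt_Ico {E : Type*} [NormedAddCommGroup E]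
    [NormedSpace ℝ E] {f f' : ℝ → E} {a T t K ε : ℝ}
    (hf : ∀ s ∈ Ico a T, HasDerivWithinAt f (f' s) (Ico a T) s) (ht : t ∈ Ico a T)
    (bound : ∀ s ∈ Ico a t, ‖f' s‖ ≤ K * ‖f s‖ + ε) :
    ‖f t‖ ≤ gronwallBound ‖f a‖ K ε (t - a) := by
  have hsub : Icc a t ⊆ Ico a T := Icc_subset_Ico_right ht.2
  refine norm_le_gronwallBound_of_norm_deriv_right_le
    (fun s hs => (hf s (hsub hs)).continuousWithinAt.mono hsub) (fun s hs => ?_) le_rfl bound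
    t (right_mem_Icc.2 ht.1)
  have hs' : s ∈ Ico a T := Ico_subset_Ico_right ht.2.le hs
  exact (hf s hs').mono_of_mem_nhdsWithin (Ico_mem_nhdsGE_of_mem hs')

section FirstMoment

variable {N : ℕ} {b β c γ Γ : (Fin N → ℝ) → ℝ}

lemma momentRHS_zero (hN : 0 < N) (x : Fin N → ℝ) :
    momentRHS N b β c γ Γ x ⟨0, hN⟩ = β x * x ⟨0, hN⟩ + b x := by
  simp [momentRHS, extComp]

lemma IsMomentSol.abs_first_le_gronwallBound {T t β₀ b₀ : ℝ} {z : ℝ → Fin N → ℝ}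
    (hz : IsMomentSol N b β c γ Γ (Ico 0 T) z) (hN : 0 < N) (hβb : ∀ x, |β x| ≤ β₀)
    (hbb : ∀ x : Fin N → ℝ, |b x| ≤ b₀ * (1 + |x ⟨0, hN⟩|)) (ht : t ∈ Ico 0 T) :
    |z t ⟨0, hN⟩| ≤ gronwallBound |z 0 ⟨0, hN⟩| (β₀ + b₀) b₀ t := by
  have hbound : ∀ s ∈ Ico 0 t, ‖momentRHS N b β c γ Γ (z s) ⟨0, hN⟩‖
      ≤ (β₀ + b₀) * ‖z s ⟨0, hN⟩‖ + b₀ := fun s _ => by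
    rw [momentRHS_zero, Real.norm_eq_abs, Real.norm_eq_abs]
    calc _ ≤ |β (z s)| * |z s ⟨0, hN⟩| + |b (z s)| := (abs_add_le _ _).trans_eq (by rw [abs_mul])
      _ ≤ β₀ * |z s ⟨0, hN⟩| + b₀ * (1 + |z s ⟨0, hN⟩|) := by gcongr; exacts [hβb _, hbb _]
      _ = (β₀ + b₀) * |z s ⟨0, hN⟩| + b₀ := by ring
  simpa using norm_le_gronwallBound_of_hasDerivWithinAt_Ico (hz ⟨0, hN⟩) ht hbound

end FirstMoment

section Scale

variable {N : ℕ} {x : Fin N → ℝ} {m : ℝ}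

lemma normN_sq_le (hm : 0 ≤ m) (hx : ∀ j : Fin N, |x j| ≤ m ^ ((j : ℕ) + 1)) :
    normN N x ^ 2 ≤ N * m ^ 2 := by
  rw [normN, sq_sqrt (Finset.sum_nonneg fun i _ => by positivity)]
  have hterm : ∀ j : Fin N, |x j| ^ ((2 : ℝ) / ((j : ℕ) + 1)) ≤ m ^ 2 := fun j => by
    calc |x j| ^ ((2 : ℝ) / ((j : ℕ) + 1))
        ≤ (m ^ ((j : ℕ) + 1)) ^ ((2 : ℝ) / ((j : ℕ) + 1)) := by gcongr; exact hx j
      _ = m ^ 2 := by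
        rw [← rpow_natCast_mul hm]
        push_cast
        rw [mul_div_cancel₀ _ (by positivity), rpow_two]
  simpa using Finset.sum_le_sum fun j (_ : j ∈ Finset.univ) => hterm j

lemma normN_le (hm : 0 ≤ m) (hx : ∀ j : Fin N, |x j| ≤ m ^ ((j : ℕ) + 1)) :
    normN N x ≤ N * m := by
  have hN : (N : ℝ) ≤ N ^ 2 := by exact_mod_cast Nat.le_self_pow two_ne_zero N
  refine le_of_sq_le_sq ?_ (by positivity)
  nlinarith [normN_sq_le hm hx, sq_nonneg m]

lemma extComp_natCast_succ {j : ℕ} (hj : j < N) :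
    extComp N x ((j + 1 : ℕ) : ℤ) = x ⟨j, hj⟩ := by
  rw [extComp, dif_pos (by omega)]
  congr
  omega

lemma abs_extComp_le (hx : ∀ j : Fin N, |x j| ≤ m ^ ((j : ℕ) + 1)) {j : ℕ}
    (hj : j ≤ N) : |extComp N x j| ≤ m ^ j := by
  cases j with
  | zero => simp [extComp]
  | succ i => rw [extComp_natCast_succ (by omega)]; exact hx ⟨i, by omega⟩

lemma abs_extComp_sub_one_mul_le (hm : 0 ≤ m) (hx : ∀ j : Fin N, |x j| ≤ m ^ ((j : ℕ) + 1))
    {j : ℕ} (hj : j ≤ N) : |extComp N x (j - 1)| * m ≤ m ^ j := by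
  cases j with
  | zero => simp [extComp]
  | succ i =>
    rw [Nat.cast_succ, add_sub_cancel_right, pow_succ]
    gcongr
    exact abs_extComp_le hx (by omega)

end Scale

section ComponentBound

lemma abs_momentCoeff_le {N n : ℕ} (hn : n < N) (p q : ℝ) :
    |((n : ℝ) + 1) * p + ((n + 1) * n / 2) * q| ≤ N ^ 2 * (|p| + |q|) := by
  have hnN : (n : ℝ) + 1 ≤ N := by exact_mod_cast hn
  have hlin : (n : ℝ) + 1 ≤ N ^ 2 := hnN.trans (by nlinarith)
  have hquad : ((n : ℝ) + 1) * n / 2 ≤ N ^ 2 := by nlinarith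
  have hlin0 : (0 : ℝ) ≤ (n : ℝ) + 1 := by positivity
  have hquad0 : (0 : ℝ) ≤ ((n : ℝ) + 1) * n / 2 := by positivity
  calc _ ≤ ((n : ℝ) + 1) * |p| + ((n + 1) * n / 2) * |q| := by
        refine (abs_add_le _ _).trans_eq ?_
        rw [abs_mul, abs_mul, abs_of_nonneg hlin0, abs_of_nonneg hquad0]
    _ ≤ N ^ 2 * |p| + N ^ 2 * |q| := by gcongr
    _ = N ^ 2 * (|p| + |q|) := by ring

variable {N : ℕ} {b β c γ Γ : (Fin N → ℝ) → ℝ} {x : Fin N → ℝ} {m B : ℝ}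

lemma abs_mul_momentRHS_le (hm : 1 ≤ m) (hx : ∀ j : Fin N, |x j| ≤ m ^ ((j : ℕ) + 1))
    (hβ : |β x| ≤ B) (hΓ : |Γ x| ≤ B) (hb : |b x| ≤ B) (hγ : |γ x| ≤ B * (1 + normN N x))
    (hc : |c x| ≤ B * (1 + normN N x ^ 2)) (k : Fin N) :
    |x k * momentRHS N b β c γ Γ x k| ≤ N ^ 2 * (2 * N + 5) * B * m ^ (2 * ((k : ℕ) + 1)) := by
  set n : ℕ := (k : ℕ)
  set e₁ := extComp N x n
  set e₂ := extComp N x (n - 1)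
  have hm0 : 0 ≤ m := zero_le_one.trans hm
  have hB : 0 ≤ B := (abs_nonneg _).trans hβ
  have hquad0 : (0 : ℝ) ≤ ((n : ℝ) + 1) * n / 2 := by positivity
  have hquad : ((n : ℝ) + 1) * n / 2 ≤ N ^ 2 := by
    have hnN : (n : ℝ) + 1 ≤ N := by exact_mod_cast k.isLt
    nlinarith
  have hxk : |x k| ≤ m ^ (n + 1) := hx k
  have he₁ : |e₁| * m ≤ m ^ (n + 1) := by
    rw [pow_succ]; gcongr; exact abs_extComp_le hx k.isLt.le
  have he₂ : |e₂| * m ^ 2 ≤ m ^ (n + 1) := by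
    rw [pow_two, ← mul_assoc, pow_succ]
    gcongr
    exact abs_extComp_sub_one_mul_le hm0 hx (by omega)
  have hS := normN_le hm0 hx
  have hP : |((n : ℝ) + 1) * β x + ((n + 1) * n / 2) * Γ x| ≤ 2 * N ^ 2 * B :=
    calc _ ≤ N ^ 2 * (|β x| + |Γ x|) := abs_momentCoeff_le k.isLt _ _
      _ ≤ N ^ 2 * (B + B) := by gcongr
      _ = 2 * N ^ 2 * B := by ring
  have hQ : |((n : ℝ) + 1) * b x + ((n + 1) * n / 2) * γ x| ≤ N ^ 2 * (N + 2) * B * m :=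
    calc _ ≤ N ^ 2 * (|b x| + |γ x|) := abs_momentCoeff_le k.isLt _ _
      _ ≤ N ^ 2 * (B + B * (1 + N * m)) := by gcongr; exact hγ.trans (by gcongr)
      _ ≤ N ^ 2 * (N + 2) * B * m := by
        nlinarith [mul_nonneg (mul_nonneg (sq_nonneg (N : ℝ)) hB) (sub_nonneg.2 hm)]
  have hR : ((n : ℝ) + 1) * n / 2 * |c x| ≤ N ^ 2 * (N + 1) * B * m ^ 2 := by
    have hS2 := normN_sq_le hm0 hx
    calc _ ≤ N ^ 2 * (B * (1 + N * m ^ 2)) := by gcongr; exact hc.trans (by gcongr)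
      _ ≤ N ^ 2 * (N + 1) * B * m ^ 2 := by
        nlinarith [mul_nonneg (mul_nonneg (sq_nonneg (N : ℝ)) hB)
          (sub_nonneg.2 (one_le_pow₀ (n := 2) hm))]
  have hQe : |((n : ℝ) + 1) * b x + ((n + 1) * n / 2) * γ x| * |e₁|
      ≤ N ^ 2 * (N + 2) * B * m ^ (n + 1) :=
    calc _ ≤ N ^ 2 * (N + 2) * B * m * |e₁| := by gcongr
      _ = N ^ 2 * (N + 2) * B * (|e₁| * m) := by ring
      _ ≤ N ^ 2 * (N + 2) * B * m ^ (n + 1) := by gcongr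
  have hRe : ((n : ℝ) + 1) * n / 2 * |c x| * |e₂| ≤ N ^ 2 * (N + 1) * B * m ^ (n + 1) :=
    calc _ ≤ N ^ 2 * (N + 1) * B * m ^ 2 * |e₂| := by gcongr
      _ = N ^ 2 * (N + 1) * B * (|e₂| * m ^ 2) := by ring
      _ ≤ N ^ 2 * (N + 1) * B * m ^ (n + 1) := by gcongr
  have hsplit : x k * momentRHS N b β c γ Γ x k
      = (((n : ℝ) + 1) * β x + ((n + 1) * n / 2) * Γ x) * x k ^ 2
        + (((n : ℝ) + 1) * b x + ((n + 1) * n / 2) * γ x) * e₁ * x k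
        + ((n : ℝ) + 1) * n / 2 * c x * e₂ * x k := by
    simp only [momentRHS]; ring
  rw [hsplit]
  calc _ ≤ |((n : ℝ) + 1) * β x + ((n + 1) * n / 2) * Γ x| * |x k| ^ 2
        + |((n : ℝ) + 1) * b x + ((n + 1) * n / 2) * γ x| * |e₁| * |x k|
        + ((n : ℝ) + 1) * n / 2 * |c x| * |e₂| * |x k| := by
        refine (abs_add_three _ _ _).trans_eq ?_
        simp only [abs_mul, abs_pow, abs_of_nonneg hquad0]
    _ ≤ 2 * N ^ 2 * B * (m ^ (n + 1)) ^ 2 + N ^ 2 * (N + 2) * B * m ^ (n + 1) * m ^ (n + 1)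
        + N ^ 2 * (N + 1) * B * m ^ (n + 1) * m ^ (n + 1) := by
        gcongr
    _ = N ^ 2 * (2 * N + 5) * B * m ^ (2 * (n + 1)) := by ring

end ComponentBound

section Lyapunov

def lyapExp (N : ℕ) (k : Fin N) : ℕ := N.factorial / ((k : ℕ) + 1)

-- With `x k` of weight `k + 1`, every summand has weight `2 N!`.
noncomputable def lyap (N : ℕ) (x : Fin N → ℝ) : ℝ := ∑ k, x k ^ (2 * lyapExp N k)

noncomputable def lyapScale (N : ℕ) (x : Fin N → ℝ) : ℝ :=
  (1 + lyap N x) ^ ((2 * N.factorial : ℕ) : ℝ)⁻¹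

-- `N` summands, each at most `2 N!` times the constant of `abs_mul_momentRHS_le`.
def lyapRate (N : ℕ) : ℝ := 2 * N * N.factorial * (N ^ 2 * (2 * N + 5))

noncomputable def lyapDeriv (N : ℕ) (x v : Fin N → ℝ) : ℝ :=
  ∑ k, ((2 * lyapExp N k : ℕ) : ℝ) * x k ^ (2 * lyapExp N k - 1) * v k

variable {N : ℕ}

lemma succ_mul_lyapExp (k : Fin N) : ((k : ℕ) + 1) * lyapExp N k = N.factorial :=
  Nat.mul_div_cancel' (Nat.dvd_factorial k.succ_pos k.isLt)

lemma lyapExp_pos (k : Fin N) : 0 < lyapExp N k :=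
  Nat.pos_of_mul_pos_left ((succ_mul_lyapExp k).symm ▸ N.factorial_pos)

lemma lyap_nonneg (x : Fin N → ℝ) : 0 ≤ lyap N x :=
  Finset.sum_nonneg fun _ _ => (even_two_mul _).pow_nonneg _

lemma lyapScale_pow (x : Fin N → ℝ) : lyapScale N x ^ (2 * N.factorial) = 1 + lyap N x :=
  rpow_inv_natCast_pow (by linarith [lyap_nonneg x]) (by positivity)

lemma one_le_lyapScale (x : Fin N → ℝ) : 1 ≤ lyapScale N x :=
  one_le_rpow (by linarith [lyap_nonneg x]) (by positivity)

lemma abs_le_lyapScale_pow (x : Fin N → ℝ) (k : Fin N) :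
    |x k| ≤ lyapScale N x ^ ((k : ℕ) + 1) := by
  have h2e : 2 * lyapExp N k ≠ 0 := by have := lyapExp_pos k; omega
  have hm := one_le_lyapScale x
  rw [← pow_le_pow_iff_left₀ (abs_nonneg _) (by positivity) h2e, (even_two_mul _).pow_abs,
    ← pow_mul, mul_left_comm, succ_mul_lyapExp, lyapScale_pow]
  calc x k ^ (2 * lyapExp N k) ≤ lyap N x :=
        Finset.single_le_sum (fun j _ => (even_two_mul _).pow_nonneg _) (Finset.mem_univ k)
    _ ≤ 1 + lyap N x := le_add_of_nonneg_left zero_le_one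

lemma normN_pow_le_lyap (x : Fin N → ℝ) : normN N x ^ (2 * N) ≤ N ^ N * (1 + lyap N x) := by
  have hm := one_le_lyapScale x
  calc normN N x ^ (2 * N) = (normN N x ^ 2) ^ N := pow_mul _ _ _
    _ ≤ (N * lyapScale N x ^ 2) ^ N := by
        gcongr; exact normN_sq_le (by positivity) (abs_le_lyapScale_pow x)
    _ = N ^ N * lyapScale N x ^ (2 * N) := by ring
    _ ≤ N ^ N * lyapScale N x ^ (2 * N.factorial) := by
        gcongr
        exact N.self_le_factorial
    _ = N ^ N * (1 + lyap N x) := by rw [lyapScale_pow]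

lemma hasDerivWithinAt_lyap {z : ℝ → Fin N → ℝ} {z' : Fin N → ℝ} {s : Set ℝ} {t : ℝ}
    (hz : ∀ k, HasDerivWithinAt (fun u => z u k) (z' k) s t) :
    HasDerivWithinAt (fun u => lyap N (z u)) (lyapDeriv N (z t) z') s t :=
  HasDerivWithinAt.fun_sum fun k _ => (hz k).pow _

end Lyapunov

section LyapunovEstimate

variable {N : ℕ} {b β c γ Γ : (Fin N → ℝ) → ℝ} {x : Fin N → ℝ} {B : ℝ}

lemma abs_lyapDeriv_momentRHS_le (hβ : |β x| ≤ B) (hΓ : |Γ x| ≤ B) (hb : |b x| ≤ B)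
    (hγ : |γ x| ≤ B * (1 + normN N x)) (hc : |c x| ≤ B * (1 + normN N x ^ 2)) :
    |lyapDeriv N x (momentRHS N b β c γ Γ x)|
      ≤ lyapRate N * B * (1 + lyap N x) := by
  set m := lyapScale N x
  set C : ℝ := N ^ 2 * (2 * N + 5) * B
  have hm := one_le_lyapScale x
  have hB : 0 ≤ B := (abs_nonneg _).trans hβ
  have hterm : ∀ k : Fin N, |((2 * lyapExp N k : ℕ) : ℝ) * x k ^ (2 * lyapExp N k - 1)
      * momentRHS N b β c γ Γ x k| ≤ 2 * N.factorial * (C * (1 + lyap N x)) := by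
    intro k
    set e := lyapExp N k
    have he := lyapExp_pos k
    have hxk : |x k| ^ 2 ≤ m ^ (2 * ((k : ℕ) + 1)) := by
      rw [pow_mul']; gcongr; exact abs_le_lyapScale_pow x k
    have hw : (m ^ (2 * ((k : ℕ) + 1))) ^ (e - 1) * m ^ (2 * ((k : ℕ) + 1))
        = 1 + lyap N x := by
      rw [← pow_succ, Nat.sub_add_cancel he, ← pow_mul, mul_assoc, succ_mul_lyapExp,
        lyapScale_pow]
    calc _ = 2 * e * ((|x k| ^ 2) ^ (e - 1) * |x k * momentRHS N b β c γ Γ x k|) := by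
          rw [show 2 * e - 1 = 2 * (e - 1) + 1 by omega]
          simp only [abs_mul, abs_pow, pow_succ, pow_mul]
          push_cast
          rw [abs_of_nonneg (by positivity)]
          ring
      _ ≤ 2 * e * ((m ^ (2 * ((k : ℕ) + 1))) ^ (e - 1) * (C * m ^ (2 * ((k : ℕ) + 1)))) := by
          gcongr
          exact abs_mul_momentRHS_le hm (abs_le_lyapScale_pow x) hβ hΓ hb hγ hc k
      _ = 2 * e * (C * (1 + lyap N x)) := by rw [← hw]; ring
      _ ≤ 2 * N.factorial * (C * (1 + lyap N x)) := by
          gcongr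
          · exact mul_nonneg (by positivity) (by linarith [lyap_nonneg x])
          · exact_mod_cast Nat.div_le_self _ _
  calc _ ≤ ∑ k : Fin N, |((2 * lyapExp N k : ℕ) : ℝ) * x k ^ (2 * lyapExp N k - 1)
          * momentRHS N b β c γ Γ x k| := Finset.abs_sum_le_sum_abs _ _
    _ ≤ ∑ _k : Fin N, 2 * N.factorial * (C * (1 + lyap N x)) :=
        Finset.sum_le_sum fun k _ => hterm k
    _ = _ := by
        simp only [Finset.sum_const, Finset.card_univ, Fintype.card_fin, nsmul_eq_mul, lyapRate, C]
        ring

end LyapunovEstimate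

def coeffBound (β₀ Γ₀ b₀ γ₀ c₀ : ℝ) (f_c f_γ : ℝ → ℝ) (a : ℝ) : ℝ :=
  (β₀ + Γ₀ + b₀ + γ₀ + c₀) * (1 + a + f_γ a + f_c a)

lemma isGrowthFunction_coeffBound {b₀ β₀ c₀ γ₀ Γ₀ : ℝ} (hb₀ : 0 ≤ b₀) (hβ₀ : 0 ≤ β₀)
    (hc₀ : 0 ≤ c₀) (hγ₀ : 0 ≤ γ₀) (hΓ₀ : 0 ≤ Γ₀) {f_c f_γ : ℝ → ℝ} (hf_c : IsGrowthFunction f_c)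
    (hf_γ : IsGrowthFunction f_γ) : IsGrowthFunction (coeffBound β₀ Γ₀ b₀ γ₀ c₀ f_c f_γ) :=
  (IsGrowthFunction.const (by positivity)).mul
    ((((IsGrowthFunction.const zero_le_one).add .id).add hf_γ).add hf_c)

lemma abs_lyapDeriv_momentRHS_le_of_abs_le {N : ℕ} (hN : 0 < N)
    {b β c γ Γ : (Fin N → ℝ) → ℝ} {b₀ β₀ c₀ γ₀ Γ₀ : ℝ} (hb₀ : 0 ≤ b₀) (hβ₀ : 0 ≤ β₀)
    (hc₀ : 0 ≤ c₀) (hγ₀ : 0 ≤ γ₀) (hΓ₀ : 0 ≤ Γ₀) {f_c f_γ : ℝ → ℝ}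
    (hfc_mono : MonotoneOn f_c (Ici 0)) (hfc_nonneg : ∀ s ∈ Ici (0 : ℝ), 0 ≤ f_c s)
    (hfγ_mono : MonotoneOn f_γ (Ici 0)) (hfγ_nonneg : ∀ s ∈ Ici (0 : ℝ), 0 ≤ f_γ s)
    {x : Fin N → ℝ} (hβ : |β x| ≤ β₀) (hΓ : |Γ x| ≤ Γ₀)
    (hb : |b x| ≤ b₀ * (1 + |x ⟨0, hN⟩|))
    (hγ : |γ x| ≤ γ₀ * (1 + f_γ |x ⟨0, hN⟩| + normN N x))
    (hc : |c x| ≤ c₀ * (1 + f_c |x ⟨0, hN⟩| + normN N x ^ 2)) {a : ℝ}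
    (hxa : |x ⟨0, hN⟩| ≤ a) :
    |lyapDeriv N x (momentRHS N b β c γ Γ x)|
      ≤ lyapRate N * coeffBound β₀ Γ₀ b₀ γ₀ c₀ f_c f_γ a * (1 + lyap N x) := by
  unfold coeffBound
  set x₀ := |x ⟨0, hN⟩|
  set S := β₀ + Γ₀ + b₀ + γ₀ + c₀
  set G := 1 + a + f_γ a + f_c a
  have hx₀ : 0 ≤ x₀ := abs_nonneg _
  have ha : 0 ≤ a := hx₀.trans hxa
  have hfγ := hfγ_mono hx₀ ha hxa
  have hfc := hfc_mono hx₀ ha hxa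
  have hfγ₀ := hfγ_nonneg x₀ hx₀
  have hfc₀ := hfc_nonneg x₀ hx₀
  have hG : 1 ≤ G := by linarith [hfγ_nonneg a ha, hfc_nonneg a ha]
  have hS : 0 ≤ S := by positivity
  have hle : ∀ {p q r : ℝ}, 0 ≤ p → p ≤ S → r ≤ G → 0 ≤ q → p * (r + q) ≤ S * G * (1 + q) :=
    fun hp hpS hr hq => by
      nlinarith [mul_le_mul_of_nonneg_left hr hp, mul_le_mul_of_nonneg_right hpS hq,
        mul_le_mul_of_nonneg_right hpS (zero_le_one.trans hG),
        mul_nonneg (mul_nonneg hS hq) (sub_nonneg.2 hG)]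
  have hB : S ≤ S * G := le_mul_of_one_le_right hS hG
  refine abs_lyapDeriv_momentRHS_le ?_ ?_ ?_ ?_ ?_
  · exact hβ.trans (by linarith)
  · exact hΓ.trans (by linarith)
  · calc |b x| ≤ b₀ * ((1 + x₀) + 0) := by simpa using hb
      _ ≤ S * G * (1 + 0) := hle hb₀ (by linarith) (by linarith) le_rfl
      _ = S * G := by ring
  · exact hγ.trans (hle hγ₀ (by linarith) (by linarith : 1 + f_γ x₀ ≤ G) (sqrt_nonneg _))
  · exact hc.trans (hle hc₀ (by linarith) (by linarith : 1 + f_c x₀ ≤ G) (sq_nonneg _))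

/-- Under Assumptions A, for each initial value there is a continuous
nondecreasing function `h` on `[0,∞)` (depending only on `N`, `z₀`, the constants and
`f_c`, `f_γ`) bounding `‖z(t)‖_N^{2N}` along every solution of the moment ODE system
started at `z₀`. -/
theorem stmt_9 (N : ℕ) (hN : 0 < N)
    (b β c γ Γ : (Fin N → ℝ) → ℝ)
    (b₀ β₀ c₀ γ₀ Γ₀ : ℝ) (hb₀ : 0 ≤ b₀) (hβ₀ : 0 ≤ β₀) (hc₀ : 0 ≤ c₀)
    (hγ₀ : 0 ≤ γ₀) (hΓ₀ : 0 ≤ Γ₀)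
    (f_c f_γ : ℝ → ℝ)
    (hfc_cont : ContinuousOn f_c (Set.Ici 0)) (hfc_mono : MonotoneOn f_c (Set.Ici 0))
    (hfc_nonneg : ∀ s ∈ Set.Ici (0 : ℝ), 0 ≤ f_c s)
    (hfγ_cont : ContinuousOn f_γ (Set.Ici 0)) (hfγ_mono : MonotoneOn f_γ (Set.Ici 0))
    (hfγ_nonneg : ∀ s ∈ Set.Ici (0 : ℝ), 0 ≤ f_γ s)
    (hβb : ∀ x, |β x| ≤ β₀) (hΓb : ∀ x, |Γ x| ≤ Γ₀)
    (hbb : ∀ x : Fin N → ℝ, |b x| ≤ b₀ * (1 + |x ⟨0, hN⟩|))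
    (hγb : ∀ x : Fin N → ℝ, |γ x| ≤ γ₀ * (1 + f_γ |x ⟨0, hN⟩| + normN N x))
    (hcb : ∀ x : Fin N → ℝ, |c x| ≤ c₀ * (1 + f_c |x ⟨0, hN⟩| + (normN N x) ^ 2))
    (z₀ : Fin N → ℝ) :
    ∃ h : ℝ → ℝ,
      ContinuousOn h (Set.Ici 0) ∧ MonotoneOn h (Set.Ici 0) ∧
      (∀ t ∈ Set.Ici (0 : ℝ), 0 ≤ h t) ∧
      ∀ (T : ℝ) (z : ℝ → Fin N → ℝ), z 0 = z₀ →
        IsMomentSol N b β c γ Γ (Set.Ico 0 T) z →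
        ∀ t ∈ Set.Ico (0 : ℝ) T, (normN N (z t)) ^ (2 * N) ≤ h t := by
  set A : ℝ → ℝ := gronwallBound |z₀ ⟨0, hN⟩| (β₀ + b₀) b₀
  set K : ℝ → ℝ := fun t => lyapRate N * coeffBound β₀ Γ₀ b₀ γ₀ c₀ f_c f_γ (A t)
  have hA_mono : Monotone A := gronwallBound_mono (abs_nonneg _) hb₀ (by positivity)
  have hA : IsGrowthFunction A :=
    .of_monotone
      (continuous_iff_continuousAt.2 fun t => (hasDerivAt_gronwallBound ..).continuousAt)
      hA_mono (by simp [A, gronwallBound_x0])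
  have hK : IsGrowthFunction K :=
    (IsGrowthFunction.const (by unfold lyapRate; positivity)).mul
      ((isGrowthFunction_coeffBound hb₀ hβ₀ hc₀ hγ₀ hΓ₀ ⟨hfc_cont, hfc_mono, hfc_nonneg⟩
        ⟨hfγ_cont, hfγ_mono, hfγ_nonneg⟩).comp hA)
  have hh : IsGrowthFunction fun t => N ^ N * ((1 + lyap N z₀) * exp (K t * t)) :=
    (IsGrowthFunction.const (by positivity)).mul
      ((IsGrowthFunction.const (by linarith [lyap_nonneg z₀])).mul (.comp .exp (hK.mul .id)))
  refine ⟨_, hh.1, hh.2.1, hh.2.2, fun T z hz0 hz t ht => ?_⟩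
  have hV : ‖1 + lyap N (z t)‖ ≤ gronwallBound ‖1 + lyap N (z 0)‖ (K t) 0 (t - 0) := by
    refine norm_le_gronwallBound_of_hasDerivWithinAt_Ico
      (fun s hs => (hasDerivWithinAt_lyap fun k => hz k s hs).const_add 1) ht fun s hs => ?_
    have hs' : s ∈ Ico 0 T := Ico_subset_Ico_right ht.2.le hs
    have hfirst : |z s ⟨0, hN⟩| ≤ A t :=
      (hz.abs_first_le_gronwallBound hN hβb hbb hs').trans (hz0 ▸ hA_mono hs.2.le)
    have hpos : 0 ≤ 1 + lyap N (z s) := by linarith [lyap_nonneg (z s)]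
    rw [add_zero, Real.norm_eq_abs, norm_of_nonneg hpos]
    exact abs_lyapDeriv_momentRHS_le_of_abs_le hN hb₀ hβ₀ hc₀ hγ₀ hΓ₀ hfc_mono hfc_nonneg
      hfγ_mono hfγ_nonneg (hβb _) (hΓb _) (hbb _) (hγb _) (hcb _) hfirst
  rw [gronwallBound_ε0, sub_zero, hz0, norm_of_nonneg (by linarith [lyap_nonneg (z t)]),
    norm_of_nonneg (by linarith [lyap_nonneg z₀])] at hV
  calc normN N (z t) ^ (2 * N) ≤ N ^ N * (1 + lyap N (z t)) := normN_pow_le_lyap _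
    _ ≤ N ^ N * ((1 + lyap N z₀) * exp (K t * t)) := by gcongr
end
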